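/- arXiv:1907.01808 — 2 statements merged into one kernel-verified Lean document; each statement's English description precedes it below -/
import Mathlib

section
/- Every reversible element of G_n is strongly reversible in G_n: if f ∈ G_n and there exists h ∈ G_n with h f h⁻¹ = f⁻¹, then there exists an involution T ∈ G_n (T² = identity) with T f T⁻¹ = f⁻¹. -/
abbrev Circle1 : Type := AddCircle (1 : ℝ)

abbrev Gn (n : ℕ) : Type := (Fin n → Circle1) × Equiv.Perm (Fin n)

namespace Gn
variable {n : ℕ}

noncomputable instance : Mul (Gn n) := ⟨fun f g => ⟨fun j => g.1 j + f.1 (g.2 j), f.2 * g.2⟩⟩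
noncomputable instance : One (Gn n) := ⟨⟨fun _ => 0, 1⟩⟩
noncomputable instance : Inv (Gn n) := ⟨fun f => ⟨fun j => -f.1 (f.2⁻¹ j), f.2⁻¹⟩⟩

noncomputable instance : Group (Gn n) where
  mul_assoc f g h := Prod.ext (funext fun j => (add_assoc _ _ _).symm) rfl
  one_mul f := Prod.ext (funext fun j => add_zero _) (one_mul _)
  mul_one f := Prod.ext (funext fun j => zero_add _) (mul_one _)
  inv_mul_cancel f := Prod.ext
    (funext fun j => show f.1 j + -f.1 (f.2⁻¹ (f.2 j)) = 0 by simp)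
    (inv_mul_cancel _)

@[simp] lemma mul_fst (f g : Gn n) (j : Fin n) : (f * g).1 j = g.1 j + f.1 (g.2 j) := rfl
@[simp] lemma mul_snd (f g : Gn n) : (f * g).2 = f.2 * g.2 := rfl
@[simp] lemma one_fst (j : Fin n) : (1 : Gn n).1 j = 0 := rfl
@[simp] lemma one_snd : (1 : Gn n).2 = 1 := rfl
@[simp] lemma inv_fst (f : Gn n) (j : Fin n) : (f⁻¹).1 j = -f.1 (f.2⁻¹ j) := rfl
@[simp] lemma inv_snd (f : Gn n) : (f⁻¹).2 = f.2⁻¹ := rfl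


end Gn

/-!
Write `f = (α, σ)` and `h = (β, τ)`, and let `S(C)` be the sum of `α` over a `σ`-cycle `C`.
The equation `h f h⁻¹ = f⁻¹` says that `τ` reverses `σ` and, summed over a cycle, that
`S(τ C) = -S(C)`. Moving each cycle by `τ` or by `τ⁻¹`, according to a fixed choice between
`s` and `-s`, matches the cycles in pairs `C ↔ C'` of equal length with `S(C') = -S(C)`
(with `C' = C` when `S(C) = -S(C)`). Reflecting every cycle onto its partner about chosen base
points gives an involution `ρ` with `ρ σ ρ = σ⁻¹`. For `T = (γ, ρ)` the equation
`T f T⁻¹ = f⁻¹` is a cohomological equation `γ ∘ σ - γ = δ`, solvable because `δ` sums to zero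
on every cycle, and a solution is corrected to make `T` an involution by halving in `𝕋`.
-/

open Equiv Function Finset MulAction

namespace Equiv.Perm

variable {X : Type*} {σ τ π : Perm X} {x y : X}

theorem zpow_apply_eq_zpow_apply_iff {a b : ℤ} :
    (σ ^ a) x = (σ ^ b) x ↔ a ≡ b [ZMOD period σ x] := by
  have : (σ ^ (b - a)) x = (σ ^ a)⁻¹ ((σ ^ b) x) := by
    rw [sub_eq_neg_add, zpow_add, zpow_neg, Perm.mul_apply]
  rw [Int.modEq_iff_dvd, ← zpow_smul_eq_iff_period_dvd, Perm.smul_def, this,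
    Perm.inv_eq_iff_eq, eq_comm]

theorem pow_apply_eq_pow_apply_iff {a b : ℕ} :
    (σ ^ a) x = (σ ^ b) x ↔ a ≡ b [MOD period σ x] := by
  rw [← Int.natCast_modEq_iff, ← zpow_apply_eq_zpow_apply_iff, zpow_natCast, zpow_natCast]

theorem _root_.SemiconjBy.period_apply (h : SemiconjBy π σ τ) (x : X) :
    period τ (π x) = period σ x := by
  have key : ∀ n : ℕ, (τ ^ n) (π x) = π x ↔ (σ ^ n) x = x := fun n => by
    rw [← Perm.mul_apply, ← (h.pow_right n).eq, Perm.mul_apply, π.injective.eq_iff]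
  refine Nat.dvd_antisymm ?_ ?_
  · rw [← pow_smul_eq_iff_period_dvd, Perm.smul_def, key, ← Perm.smul_def,
      pow_period_smul]
  · rw [← pow_smul_eq_iff_period_dvd, Perm.smul_def, ← key, ← Perm.smul_def,
      pow_period_smul]

theorem _root_.SemiconjBy.sameCycle_apply_iff (h : SemiconjBy π σ τ) :
    τ.SameCycle (π x) (π y) ↔ σ.SameCycle x y := by
  rw [← mul_inv_eq_iff_eq_mul.mpr h, sameCycle_conj]
  simp

theorem SameCycle.period_eq (h : σ.SameCycle x y) : period σ x = period σ y := by
  obtain ⟨k, rfl⟩ := h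
  exact ((Commute.refl σ).zpow_left k).period_apply x |>.symm

theorem exists_cycle_base (σ : Perm X) :
    ∃ r : X → X, (∀ {x y}, σ.SameCycle x y → r x = r y) ∧ ∀ x, σ.SameCycle (r x) x :=
  ⟨fun x => (Quotient.mk (SameCycle.setoid σ) x).out, fun h => congrArg Quotient.out
    (Quotient.sound h), fun x => Quotient.mk_out (s := SameCycle.setoid σ) x⟩

theorem exists_involutive_reverser_sameCycle {ι : X → X} (hι : Involutive ι)
    (hcyc : ∀ {x y}, σ.SameCycle x y → σ.SameCycle (ι x) (ι y))
    (hper : ∀ x, period σ (ι x) = period σ x) :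
    ∃ ρ : Perm X, Involutive ρ ∧ SemiconjBy ρ σ σ⁻¹ ∧ ∀ x, σ.SameCycle (ι x) (ρ x) := by
  obtain ⟨r, hr_eq, hr⟩ := exists_cycle_base σ
  choose d hd using fun x => hr x
  let ρ (x : X) : X := (σ ^ (-d x)) (r (ι x))
  have hιρ (x : X) : σ.SameCycle (ι x) (ρ x) := (hr (ι x)).symm.trans ⟨-d x, rfl⟩
  have hper_r (x : X) : period σ (r x) = period σ x := (hr x).period_eq
  have hρσ (x : X) : ρ (σ x) = σ⁻¹ (ρ x) := by
    have hx : σ.SameCycle x (σ x) := sameCycle_apply_right.mpr (SameCycle.refl σ x)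
    have hmod : d (σ x) ≡ 1 + d x [ZMOD period σ (r x)] := by
      rw [← zpow_apply_eq_zpow_apply_iff, zpow_one_add, Perm.mul_apply, hd, hr_eq hx, hd]
    rw [hper_r, ← hper, ← hper_r] at hmod
    show (σ ^ (-d (σ x))) (r (ι (σ x))) = σ⁻¹ ((σ ^ (-d x)) (r (ι x)))
    rw [← hr_eq (hcyc hx), ← Perm.mul_apply, ← zpow_neg_one, ← zpow_add,
      zpow_apply_eq_zpow_apply_iff, ← neg_add]
    exact hmod.neg
  have hρρ : Involutive ρ := fun x => by
    have hmod : d (ρ x) ≡ -d x [ZMOD period σ (r (ι x))] := by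
      have h := hd (ρ x)
      rw [← hr_eq (hιρ x)] at h
      exact zpow_apply_eq_zpow_apply_iff.mp h
    rw [hper_r, hper, ← hper_r] at hmod
    show (σ ^ (-d (ρ x))) (r (ι (ρ x))) = x
    rw [← hr_eq (hcyc (hιρ x)), hι x]
    conv_rhs => rw [← hd x]
    rw [zpow_apply_eq_zpow_apply_iff]
    simpa using hmod.neg
  exact ⟨hρρ.toPerm, hρρ, Perm.ext hρσ, hιρ⟩

variable {A : Type*}

open scoped Classical in
/-- For `s ≠ -s` exactly one of `s`, `-s` comes first in `WellOrderingRel`; it is moved by `τ` and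
the other by `τ⁻¹`, so that `x ↦ pairingPerm τ (S x) x` is an involution when `S ∘ τ = -S`. -/
noncomputable def pairingPerm [Neg A] (τ : Perm X) (s : A) : Perm X :=
  if s = -s then 1 else if WellOrderingRel s (-s) then τ else τ⁻¹

theorem pairingPerm_neg [InvolutiveNeg A] (τ : Perm X) {s : A} (hs : s ≠ -s) :
    pairingPerm τ (-s) = (pairingPerm τ s)⁻¹ := by
  have hs' : -s ≠ -(-s) := by rwa [neg_neg, ne_comm]
  unfold pairingPerm
  rw [if_neg hs, if_neg hs', neg_neg]
  rcases trichotomous_of WellOrderingRel s (-s) with h | h | h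
  · rw [if_pos h, if_neg (asymm h)]
  · exact absurd h hs
  · rw [if_neg (asymm h), if_pos h, inv_inv]

theorem pairingPerm_eq_one_or_semiconjBy [Neg A] (hτ : SemiconjBy τ σ σ⁻¹) (s : A) :
    pairingPerm τ s = 1 ∨ SemiconjBy (pairingPerm τ s) σ σ⁻¹ := by
  unfold pairingPerm
  split_ifs
  exacts [.inl rfl, .inr hτ, .inr (by simpa using hτ.inv_symm_left.inv_right)]

section Pairing

variable [InvolutiveNeg A] {S : X → A} (hS : ∀ x, S (τ x) = -S x)
include hS

theorem apply_pairingPerm_apply_eq_neg (x : X) : S (pairingPerm τ (S x) x) = -S x := by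
  unfold pairingPerm
  split_ifs with h
  exacts [h, hS x, neg_eq_iff_eq_neg.mp (by simpa using (hS (τ⁻¹ x)).symm)]

theorem involutive_pairingPerm_apply : Involutive fun x => pairingPerm τ (S x) x := fun x => by
  show pairingPerm τ (S (pairingPerm τ (S x) x)) (pairingPerm τ (S x) x) = x
  by_cases hx : S x = -S x
  · have h : pairingPerm τ (S x) x = x := by simp only [pairingPerm, if_pos hx, Perm.one_apply]
    rw [h, h]
  · rw [apply_pairingPerm_apply_eq_neg hS, pairingPerm_neg τ hx]
    exact Perm.inv_eq_iff_eq.mpr rfl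

end Pairing

variable [Fintype X] [DecidableEq X]

section AddCommMonoid

variable [AddCommMonoid A]

def cycleSum (σ : Perm X) (α : X → A) (x : X) : A := ∑ j with σ.SameCycle x j, α j

theorem cycleSum_eq_of_sameCycle (α : X → A) (h : σ.SameCycle x y) :
    cycleSum σ α x = cycleSum σ α y := by
  unfold cycleSum
  congr 1
  ext j
  simp only [mem_filter, mem_univ, true_and]
  exact ⟨h.symm.trans, h.trans⟩

theorem cycleSum_apply (α : X → A) (x : X) : cycleSum σ α (σ x) = cycleSum σ α x :=
  (cycleSum_eq_of_sameCycle α (sameCycle_apply_right.mpr (SameCycle.refl σ x))).symm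

theorem cycleSum_inv_apply (α : X → A) (x : X) : cycleSum σ α (σ⁻¹ x) = cycleSum σ α x :=
  (cycleSum_eq_of_sameCycle α (sameCycle_symm_apply_right.mpr (SameCycle.refl σ x))).symm

theorem cycleSum_inv (α : X → A) (x : X) : cycleSum σ⁻¹ α x = cycleSum σ α x := by
  simp only [cycleSum, sameCycle_inv]

theorem _root_.SemiconjBy.cycleSum_comp (h : SemiconjBy π σ τ) (α : X → A) (x : X) :
    cycleSum σ (α ∘ π) x = cycleSum τ α (π x) :=
  Finset.sum_equiv π (by simp [h.sameCycle_apply_iff]) (fun _ _ => rfl)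

theorem sum_range_period (α : X → A) (x : X) :
    ∑ t ∈ range (period σ x), α ((σ ^ t) x) = cycleSum σ α x := by
  refine Finset.sum_nbij (fun t => (σ ^ t) x) ?_ ?_ ?_ (fun _ _ => rfl)
  · intro t _
    simpa using (sameCycle_pow_right (n := t)).mpr (SameCycle.refl σ x)
  · intro a ha b hb hab
    exact (pow_apply_eq_pow_apply_iff.mp hab).eq_of_lt_of_lt (mem_range.mp ha) (mem_range.mp hb)
  · intro y hy
    obtain ⟨m, rfl⟩ := (mem_filter.mp hy).2.exists_nat_pow_eq
    refine ⟨m % period σ x, mem_range.mpr (Nat.mod_lt _ ?_), ?_⟩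
    · exact period_pos_of_orderOf_pos (orderOf_pos σ) x
    · exact pow_apply_eq_pow_apply_iff.mpr (Nat.mod_modEq _ _)

theorem exists_add_eq_of_cycleSum_eq_zero (δ : X → A) (hδ : ∀ x, cycleSum σ δ x = 0) :
    ∃ γ : X → A, ∀ x, γ (σ x) = γ x + δ x := by
  obtain ⟨r, hr_eq, hr⟩ := exists_cycle_base σ
  choose d hd using fun x => (hr x).exists_nat_pow_eq
  let partialSum (y : X) (m : ℕ) : A := ∑ t ∈ range m, δ ((σ ^ t) y)
  have periodic (y : X) : Periodic (partialSum y) (period σ y) := fun m => by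
    simp only [partialSum, sum_range_add]
    simp_rw [add_comm m, pow_add, Perm.mul_apply]
    rw [(sameCycle_pow_right.mpr (SameCycle.refl σ y)).period_eq, sum_range_period, hδ, add_zero]
  refine ⟨fun x => partialSum (r x) (d x), fun x => ?_⟩
  have hσx : r (σ x) = r x := (hr_eq (sameCycle_apply_right.mpr (SameCycle.refl σ x))).symm
  have hmod : d (σ x) ≡ d x + 1 [MOD period σ (r x)] := by
    rw [← pow_apply_eq_pow_apply_iff, pow_succ', Perm.mul_apply, hd, ← hσx, hd]
  show partialSum (r (σ x)) (d (σ x)) = partialSum (r x) (d x) + δ x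
  rw [hσx, ← (periodic _).map_mod_nat, hmod, (periodic _).map_mod_nat]
  simp only [partialSum, sum_range_succ, hd]

end AddCommMonoid

variable [AddCommGroup A]

theorem cycleSum_apply_eq_neg_of_semiconjBy (hτ : SemiconjBy τ σ σ⁻¹)
    {α β : X → A} (hβ : ∀ j, α j + β (σ j) = β j - α (σ⁻¹ (τ j))) (x : X) :
    cycleSum σ α (τ x) = -cycleSum σ α x := by
  have key : cycleSum σ α x + cycleSum σ (β ∘ σ) x
      = cycleSum σ β x - cycleSum σ (α ∘ ⇑(σ⁻¹ * τ)) x := by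
    simp only [cycleSum, ← sum_add_distrib, ← sum_sub_distrib]
    exact sum_congr rfl fun j _ => hβ j
  rw [(Commute.refl σ).cycleSum_comp, (SemiconjBy.mul_left (Commute.refl σ⁻¹) hτ).cycleSum_comp,
    cycleSum_inv, Perm.mul_apply, cycleSum_apply, cycleSum_inv_apply] at key
  calc cycleSum σ α (τ x) = cycleSum σ β x - (cycleSum σ α x + cycleSum σ β x) := by
        rw [key]; abel
    _ = -cycleSum σ α x := by abel

theorem exists_involutive_reverser_of_cycleSum_neg
    (hτ : SemiconjBy τ σ σ⁻¹) {α : X → A}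
    (hτα : ∀ x, cycleSum σ α (τ x) = -cycleSum σ α x) :
    ∃ ρ : Perm X, Involutive ρ ∧ SemiconjBy ρ σ σ⁻¹ ∧ ∀ x, cycleSum σ α (ρ x) = -cycleSum σ α x := by
  have hcyc {x y : X} (h : σ.SameCycle x y) :
      σ.SameCycle (pairingPerm τ (cycleSum σ α x) x) (pairingPerm τ (cycleSum σ α y) y) := by
    rw [cycleSum_eq_of_sameCycle α h]
    rcases pairingPerm_eq_one_or_semiconjBy hτ (cycleSum σ α y) with h1 | h1
    · simpa [h1] using h
    · exact sameCycle_inv.mp (h1.sameCycle_apply_iff.mpr h)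
  have hper (x : X) : period σ (pairingPerm τ (cycleSum σ α x) x) = period σ x := by
    rcases pairingPerm_eq_one_or_semiconjBy hτ (cycleSum σ α x) with h1 | h1
    · simp [h1]
    · exact (period_inv σ _).symm.trans (h1.period_apply x)
  obtain ⟨ρ, hρ, hρσ, hιρ⟩ :=
    exists_involutive_reverser_sameCycle (involutive_pairingPerm_apply hτα) hcyc hper
  exact ⟨ρ, hρ, hρσ, fun x =>
    (cycleSum_eq_of_sameCycle α (hιρ x)).symm.trans (apply_pairingPerm_apply_eq_neg hτα x)⟩


theorem exists_translation_of_involutive_reverser [DivisibleBy A ℤ] {ρ : Perm X}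
    (hρ : Involutive ρ) (hρσ : SemiconjBy ρ σ σ⁻¹) {α : X → A}
    (hρα : ∀ x, cycleSum σ α (ρ x) = -cycleSum σ α x) :
    ∃ γ : X → A, (∀ x, γ x + γ (ρ x) = 0) ∧ ∀ x, α x + γ (σ x) = γ x - α (σ⁻¹ (ρ x)) := by
  have hσρ (x : X) : σ⁻¹ (ρ x) = ρ (σ x) := (Perm.ext_iff.mp hρσ x).symm
  let δ (x : X) : A := -(α x + α (ρ (σ x)))
  have hδ (x : X) : cycleSum σ δ x = 0 := by
    have : cycleSum σ δ x = -(cycleSum σ α x + cycleSum σ (α ∘ ⇑(ρ * σ)) x) := by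
      simp only [cycleSum, δ, sum_add_distrib, sum_neg_distrib, comp_apply, Perm.mul_apply]
    rw [this, (hρσ.mul_left (Commute.refl σ)).cycleSum_comp, cycleSum_inv, Perm.mul_apply, hρα,
      cycleSum_apply, add_neg_cancel, neg_zero]
  obtain ⟨γ₀, hγ₀⟩ := exists_add_eq_of_cycleSum_eq_zero δ hδ
  -- `ε` is invariant under `σ` and `ρ`, so subtracting half of it keeps the equation for `γ₀`
  -- and makes `γ + γ ∘ ρ` vanish.
  let ε (x : X) : A := γ₀ x + γ₀ (ρ x)
  have hεσ (x : X) : ε (σ x) = ε x := by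
    have hδ' : δ (σ⁻¹ (ρ x)) = δ x := by
      show -(α _ + α (ρ (σ (σ⁻¹ (ρ x))))) = -(α x + α (ρ (σ x)))
      rw [show σ (σ⁻¹ (ρ x)) = ρ x by simp, hρ x, ← hσρ, add_comm]
    have h := hγ₀ (σ⁻¹ (ρ x))
    rw [show σ (σ⁻¹ (ρ x)) = ρ x by simp, hδ'] at h
    simp only [ε, hγ₀ x, ← hσρ, h]
    abel
  have hερ (x : X) : ε (ρ x) = ε x := by simp only [ε, hρ x, add_comm]
  let half (x : X) : A := DivisibleBy.div (ε x) (2 : ℤ)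
  have halve (x : X) : half x + half x = ε x := by
    rw [← two_zsmul, DivisibleBy.div_cancel _ two_ne_zero]
  refine ⟨fun x => γ₀ x - half x, fun x => ?_, fun x => ?_⟩
  · show γ₀ x - half x + (γ₀ (ρ x) - DivisibleBy.div (ε (ρ x)) 2) = 0
    rw [hερ, sub_add_sub_comm, halve x]
    exact sub_self _
  · show α x + (γ₀ (σ x) - DivisibleBy.div (ε (σ x)) 2) = γ₀ x - half x - α (σ⁻¹ (ρ x))
    rw [hγ₀, hεσ, hσρ]
    simp only [δ]
    abel

end Equiv.Perm

namespace Gn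

variable {n : ℕ}

theorem semiconjBy_inv_iff {f g : Gn n} :
    SemiconjBy g f f⁻¹ ↔
      SemiconjBy g.2 f.2 f.2⁻¹ ∧ ∀ j, f.1 j + g.1 (f.2 j) = g.1 j - f.1 (f.2⁻¹ (g.2 j)) := by
  simp only [SemiconjBy, Prod.ext_iff, funext_iff, mul_fst, inv_fst, inv_snd, mul_snd,
    sub_eq_add_neg, and_comm]

theorem mul_self_eq_one_iff {g : Gn n} :
    g * g = 1 ↔ Involutive g.2 ∧ ∀ j, g.1 j + g.1 (g.2 j) = 0 := by
  simp only [Prod.ext_iff, funext_iff, mul_fst, one_fst, mul_snd, one_snd, Perm.ext_iff,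
    Perm.mul_apply, Perm.one_apply, Involutive, and_comm]

end Gn

/-- **Theorem 2.** Every reversible element of `G_n` is strongly reversible in `G_n`. -/
theorem stmt5 {n : ℕ} (f : Gn n) (h : Gn n) (hrev : h * f * h⁻¹ = f⁻¹) :
    ∃ T : Gn n, T * T = 1 ∧ T * f * T⁻¹ = f⁻¹ := by
  obtain ⟨hτ, hβ⟩ := Gn.semiconjBy_inv_iff.mp (mul_inv_eq_iff_eq_mul.mp hrev)
  obtain ⟨ρ, hρ, hρσ, hρα⟩ :=
    Perm.exists_involutive_reverser_of_cycleSum_neg hτ (Perm.cycleSum_apply_eq_neg_of_semiconjBy hτ hβ)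
  obtain ⟨γ, hγρ, hγ⟩ := Perm.exists_translation_of_involutive_reverser hρ hρσ hρα
  exact ⟨(γ, ρ), Gn.mul_self_eq_one_iff.mpr ⟨hρ, hγρ⟩,
    mul_inv_eq_iff_eq_mul.mpr (Gn.semiconjBy_inv_iff.mpr ⟨hρσ, hγ⟩)⟩
end

section
/- Every f ∈ G_n with A(f) = 0 can be written as a product of two elements of G_n each of finite order. -/
namespace Gn
variable {n : ℕ}

/-- The map `A : G_n → 𝕋`, `A(α, σ) = 2(α_1 + ⋯ + α_n)` (it is a group homomorphism). -/
noncomputable def Afun (f : Gn n) : Circle1 := 2 • ∑ j, f.1 j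

end Gn

/-! Write `f = (α, σ)` and let `c` be the cyclic rotation of `Fin n`.
Then `f = (0, σ c⁻¹) · (α, c)`, and the first factor lies in the finite subgroup `Sₙ`.
Along the cycle each coordinate picks up every `αⱼ` once, so `(α, c)ⁿ = (s, …, s; 1)`
with `s = ∑ αⱼ`. Hence `(α, c)²ⁿ = 1` exactly when `2s = 0`, i.e. `A(f) = 0`. -/

namespace Gn
variable {n : ℕ}
open Finset Fin.NatCast

def ofPerm : Equiv.Perm (Fin n) →* Gn n where
  toFun π := (0, π)
  map_one' := rfl
  map_mul' _ _ := Prod.ext (funext fun _ => (add_zero 0).symm) rfl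

lemma isOfFinOrder_ofPerm (π : Equiv.Perm (Fin n)) : IsOfFinOrder (ofPerm π) :=
  ofPerm.isOfFinOrder (isOfFinOrder_of_finite π)

lemma ofPerm_mul (π : Equiv.Perm (Fin n)) (f : Gn n) : ofPerm π * f = (f.1, π * f.2) :=
  Prod.ext (funext fun _ => add_zero _) rfl

lemma pow_snd (f : Gn n) (k : ℕ) : (f ^ k).2 = f.2 ^ k := by
  induction k with
  | zero => rfl
  | succ k ih => rw [pow_succ, mul_snd, ih, pow_succ]

lemma pow_fst (f : Gn n) (k : ℕ) (j : Fin n) :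
    (f ^ k).1 j = ∑ i ∈ range k, f.1 ((f.2 ^ i) j) := by
  induction k generalizing j with
  | zero => rfl
  | succ k ih =>
    rw [pow_succ, mul_fst, ih, sum_range_succ', add_comm]
    simp only [pow_succ, Equiv.Perm.mul_apply, pow_zero, Equiv.Perm.one_apply]

lemma finRotate_pow_apply (k : ℕ) (j : Fin n) :
    haveI := j.neZero; (finRotate n ^ k) j = j + k := by
  have := j.neZero
  induction k with
  | zero => simp
  | succ k ih => rw [pow_succ', Equiv.Perm.mul_apply, ih, finRotate_apply]; push_cast; abel

lemma finRotate_pow_self : finRotate n ^ n = 1 :=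
  Equiv.ext fun j => by simp [finRotate_pow_apply]

lemma sum_range_finRotate_pow_apply {M : Type*} [AddCommMonoid M] (β : Fin n → M) (j : Fin n) :
    ∑ i ∈ range n, β ((finRotate n ^ i) j) = ∑ i, β i := by
  have := j.neZero
  simp only [finRotate_pow_apply, ← Fin.sum_univ_eq_sum_range (fun i => β (j + i)),
    Fin.cast_val_eq_self]
  exact Fintype.sum_equiv (Equiv.addLeft j) _ _ fun _ => rfl

lemma pow_self_of_snd_eq_finRotate {f : Gn n} (hf : f.2 = finRotate n) :
    f ^ n = (fun _ => ∑ j, f.1 j, 1) := by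
  refine Prod.ext (funext fun j => ?_) ?_
  · rw [pow_fst, hf, sum_range_finRotate_pow_apply]
  · rw [pow_snd, hf, finRotate_pow_self]

lemma isOfFinOrder_of_snd_eq_finRotate {f : Gn n} (hf : f.2 = finRotate n) (hA : Afun f = 0) :
    IsOfFinOrder f := by
  rcases n.eq_zero_or_pos with rfl | hn
  · exact isOfFinOrder_of_finite f
  refine (isOfFinOrder_iff_pow_eq_one.2 ⟨2, two_pos, ?_⟩).of_pow hn.ne'
  rw [pow_self_of_snd_eq_finRotate hf]
  refine Prod.ext (funext fun j => ?_) (one_pow 2)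
  rw [Afun] at hA
  rw [pow_fst]
  simpa [sum_range_succ, ← two_nsmul] using hA

end Gn

/-- Every `f ∈ G_n` with `A(f) = 0` is a product of two finite order elements of `G_n`. -/
theorem stmt11 {n : ℕ} (f : Gn n) (hf : Gn.Afun f = 0) :
    ∃ g h : Gn n, IsOfFinOrder g ∧ IsOfFinOrder h ∧ f = g * h :=
  ⟨Gn.ofPerm (f.2 * (finRotate n)⁻¹), (f.1, finRotate n), Gn.isOfFinOrder_ofPerm _,
    Gn.isOfFinOrder_of_snd_eq_finRotate rfl hf, by rw [Gn.ofPerm_mul, inv_mul_cancel_right]⟩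
end
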